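/- arXiv:1607.05374 — 6 statements merged into one kernel-verified Lean document; each statement's English description precedes it below -/
import Mathlib

section
/- Let n ≥ 3 be an integer and define q(t) = t^{n−2} g(t) / (1−t²)^{n−1} for t ∈ (0,1), where g(t) = (1/n) ∫_t^1 (1−s²)^{n−2} s^{−(n−1)} ds. Then for every t ∈ (0,1), 1/(2n(n−1)) < q(t) < 1/(n(n−2)); equivalently, (1/(2n(n−1))) (1−t²)^{n−1}/t^{n−2} < g(t) < (1/(n(n−2))) (1−t²)^{n−1}/t^{n−2}. -/
/-! Write `h(s) = (1 - s²)^(n-2) / s^(n-1)` and `F(s) = (1 - s²)^(n-1) / s^(n-2)`. Then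
`-F' = ((n - 2) + n s²) h` and `F(1) = 0`, so `F(t) = ∫_t^1 ((n - 2) + n s²) h(s) ds`. On `(t, 1)`
the weight `(n - 2) + n s²` lies strictly between `n - 2` and `2(n - 1)`, while
`∫_t^1 h = n g(t)`; hence `(n - 2) n g(t) < F(t) < 2 (n - 1) n g(t)`. Indexing by
`k = n - 2` keeps the exponents free of truncated subtraction. -/

open MeasureTheory Metric Set

noncomputable section

/-- The open unit ball setting: Euclidean n-space. -/
abbrev En (n : ℕ) := EuclideanSpace ℝ (Fin n)

/-- Lebesgue volume measure normalized so that the unit ball has measure 1. -/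
def nuMeasure (n : ℕ) : Measure (En n) :=
  (volume (ball (0 : En n) 1))⁻¹ • (volume : Measure (En n))

/-- The Möbius invariant measure `dτ(x) = dν(x)/(1-|x|²)ⁿ`. -/
def tauMeasure (n : ℕ) : Measure (En n) :=
  (nuMeasure n).withDensity fun x => ENNReal.ofReal ((1 - ‖x‖ ^ 2) ^ n)⁻¹

/-- The surface measure on the unit sphere, normalized so that the sphere has measure 1. -/
def sigmaMeasure (n : ℕ) : Measure (sphere (0 : En n) 1) :=
  ((volume : Measure (En n)).toSphere univ)⁻¹ • (volume : Measure (En n)).toSphere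

/-- `[a,x]` via the identity `[a,x]² = |x-a|² + (1-|x|²)(1-|a|²)`. -/
def qbracket {n : ℕ} (a x : En n) : ℝ :=
  Real.sqrt (‖x - a‖ ^ 2 + (1 - ‖x‖ ^ 2) * (1 - ‖a‖ ^ 2))

/-- The Möbius transformation `φ_a` of the unit ball with `φ_a(a) = 0`, `φ_a(0) = a`. -/
def mobius {n : ℕ} (a x : En n) : En n :=
  (qbracket a x ^ 2)⁻¹ • (‖x - a‖ ^ 2 • a - (1 - ‖a‖ ^ 2) • (x - a))

/-- `g(r) = (1/n) ∫_r^1 (1-s²)^{n-2} s^{-(n-1)} ds`. -/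
def gfun (n : ℕ) (r : ℝ) : ℝ :=
  (1 / (n : ℝ)) * ∫ s in r..(1 : ℝ), (1 - s ^ 2) ^ (n - 2) / s ^ (n - 1)

/-- The hyperbolic Green function `G_h(x,y) = g(|φ_x(y)|)`. -/
def Gh (n : ℕ) (x y : En n) : ℝ := gfun n ‖mobius x y‖

/-- The Green integral `G_h[ψ](x) = ∫_{𝔹ⁿ} G_h(x,y) ψ(y) dτ(y)`. -/
def GhInt (n : ℕ) (ψ : En n → En n) (x : En n) : En n :=
  ∫ y in ball (0 : En n) 1, Gh n x y • ψ y ∂(tauMeasure n)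

/-- The Poisson–Szegő kernel `P_h(x,ξ) = ((1-|x|²)/|ξ-x|²)^{n-1}`. -/
def Ph (n : ℕ) (x : En n) (ξ : sphere (0 : En n) 1) : ℝ :=
  ((1 - ‖x‖ ^ 2) / ‖(ξ : En n) - x‖ ^ 2) ^ (n - 1)

/-- The Poisson integral `P_h[φ](x) = ∫_{𝕊ⁿ⁻¹} P_h(x,ξ) φ(ξ) dσ(ξ)`. -/
def PhInt (n : ℕ) (φ : En n → En n) (x : En n) : En n :=
  ∫ ξ, Ph n x ξ • φ (ξ : En n) ∂(sigmaMeasure n)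

/-- The `i`-th standard basis vector. -/
def basisE (n : ℕ) (i : Fin n) : En n := EuclideanSpace.single i 1

/-- The Euclidean Laplacian of a vector-valued function. -/
def lap {n : ℕ} (u : En n → En n) (x : En n) : En n :=
  ∑ i : Fin n, fderiv ℝ (fun y => fderiv ℝ u y (basisE n i)) x (basisE n i)

/-- The hyperbolic Laplacian
`Δ_h u(x) = (1-|x|²)² Δu(x) + 2(n-2)(1-|x|²) Σᵢ xᵢ ∂u/∂xᵢ(x)`. -/
def hypLap (n : ℕ) (u : En n → En n) (x : En n) : En n :=
  (1 - ‖x‖ ^ 2) ^ 2 • lap u x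
    + (2 * ((n : ℝ) - 2) * (1 - ‖x‖ ^ 2)) • ∑ i : Fin n, x i • fderiv ℝ u x (basisE n i)

/-- Pochhammer symbol `(a)_k`. -/
def poch (a : ℝ) (k : ℕ) : ℝ := (ascPochhammer ℝ k).eval a

/-- Gauss hypergeometric series `F(a,b;c;s)`. -/
def hyperF (a b c s : ℝ) : ℝ :=
  ∑' k : ℕ, poch a k * poch b k / ((k.factorial : ℝ) * poch c k) * s ^ k

/-- A majorant: continuous, increasing, `ω(0)=0`, with `ω(t)/t` non-increasing. -/
def IsMajorant (ω : ℝ → ℝ) : Prop :=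
  ContinuousOn ω (Ici 0) ∧ MonotoneOn ω (Ici 0) ∧ ω 0 = 0 ∧
    (∀ x ∈ Ici (0:ℝ), 0 ≤ ω x) ∧
    ∀ s t : ℝ, 0 < s → s ≤ t → ω t / t ≤ ω s / s

/-- A fast majorant: `∫₀^ρ ω(t)/t dt ≤ C ω(ρ)` for small `ρ`. -/
def IsFastMajorant (ω : ℝ → ℝ) : Prop :=
  IsMajorant ω ∧ ∃ ρ₀ > (0:ℝ), ∃ C : ℝ,
    ∀ ρ : ℝ, 0 < ρ → ρ < ρ₀ → (∫ t in (0:ℝ)..ρ, ω t / t) ≤ C * ω ρ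

end

section GreenFunctionBounds

variable (k : ℕ)

/-- The integrand of `gfun (k + 2)`. -/
noncomputable def greenKernel (s : ℝ) : ℝ := (1 - s ^ 2) ^ k / s ^ (k + 1)

lemma greenKernel_pos {s : ℝ} (hs₀ : 0 < s) (hs₁ : s < 1) : 0 < greenKernel k s := by
  have : 0 < 1 - s ^ 2 := by nlinarith
  unfold greenKernel
  positivity

lemma continuousOn_greenKernel {t : ℝ} (ht : 0 < t) : ContinuousOn (greenKernel k) (Ici t) :=
  ContinuousOn.div (by fun_prop) (by fun_prop) fun s hs => pow_ne_zero _ (ht.trans_le hs).ne'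

lemma hasDerivAt_neg_one_sub_sq_pow_div_pow {s : ℝ} (hs : s ≠ 0) :
    HasDerivAt (fun s : ℝ => -((1 - s ^ 2) ^ (k + 1) / s ^ k))
      ((k + (k + 2) * s ^ 2) * greenKernel k s) s := by
  have hsq : HasDerivAt (fun s : ℝ => 1 - s ^ 2) (-(2 * s)) s := by
    simpa using (hasDerivAt_pow 2 s).const_sub 1
  have hnum := hsq.fun_pow (k + 1)
  have hden := hasDerivAt_pow k s
  refine ((hnum.fun_div hden (pow_ne_zero _ hs)).fun_neg).congr_deriv ?_
  rcases k with _ | k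
  · norm_num [greenKernel]
    field_simp
  · simp only [greenKernel, Nat.cast_add, Nat.cast_one, Nat.add_sub_cancel]
    field_simp
    ring

lemma integral_mul_greenKernel {t : ℝ} (ht₀ : 0 < t) (ht₁ : t ≤ 1) :
    ∫ s in t..1, (k + (k + 2) * s ^ 2) * greenKernel k s = (1 - t ^ 2) ^ (k + 1) / t ^ k := by
  have hG : ContinuousOn (greenKernel k) (Icc t 1) :=
    (continuousOn_greenKernel k ht₀).mono Icc_subset_Ici_self
  rw [intervalIntegral.integral_eq_sub_of_hasDerivAt
    (fun s hs => hasDerivAt_neg_one_sub_sq_pow_div_pow k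
      (ht₀.trans_le (uIcc_of_le ht₁ ▸ hs).1).ne')
    (ContinuousOn.intervalIntegrable_of_Icc ht₁ (by fun_prop))]
  simp

lemma integral_greenKernel_bounds {t : ℝ} (ht₀ : 0 < t) (ht₁ : t < 1) :
    k * ∫ s in t..1, greenKernel k s < (1 - t ^ 2) ^ (k + 1) / t ^ k ∧
      (1 - t ^ 2) ^ (k + 1) / t ^ k < (2 * k + 2) * ∫ s in t..1, greenKernel k s := by
  have hG : ContinuousOn (greenKernel k) (Icc t 1) :=
    (continuousOn_greenKernel k ht₀).mono Icc_subset_Ici_self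
  have hGt := greenKernel_pos k ht₀ ht₁
  have hnonneg : ∀ s ∈ Ioc t 1, 0 ≤ greenKernel k s := fun s hs => by
    rcases hs.2.lt_or_eq with hs₁ | rfl
    · exact (greenKernel_pos k (ht₀.trans hs.1) hs₁).le
    · simp [greenKernel]
  rw [← integral_mul_greenKernel k ht₀ ht₁.le, ← intervalIntegral.integral_const_mul,
    ← intervalIntegral.integral_const_mul]
  constructor <;> refine intervalIntegral.integral_lt_integral_of_continuousOn_of_le_of_exists_lt
    ht₁ (by fun_prop) (by fun_prop) (fun s hs => ?_) ⟨t, left_mem_Icc.2 ht₁.le, ?_⟩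
  · exact mul_le_mul_of_nonneg_right (le_add_of_nonneg_right (by positivity)) (hnonneg s hs)
  · exact mul_lt_mul_of_pos_right (lt_add_of_pos_right _ (by positivity)) hGt
  · have : s ^ 2 ≤ 1 := by nlinarith [hs.1, hs.2]
    exact mul_le_mul_of_nonneg_right (by nlinarith) (hnonneg s hs)
  · have : t ^ 2 < 1 := by nlinarith
    exact mul_lt_mul_of_pos_right (by nlinarith) hGt

lemma gfun_bounds (hk : 0 < k) {t : ℝ} (ht₀ : 0 < t) (ht₁ : t < 1) :
    1 / (2 * (k + 2) * (k + 1)) * ((1 - t ^ 2) ^ (k + 1) / t ^ k) < gfun (k + 2) t ∧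
      gfun (k + 2) t < 1 / ((k + 2) * k) * ((1 - t ^ 2) ^ (k + 1) / t ^ k) := by
  have hgfun : gfun (k + 2) t = (∫ s in t..1, greenKernel k s) / (k + 2) := by
    simp only [gfun, greenKernel, Nat.add_sub_cancel, show k + 2 - 1 = k + 1 by omega]
    push_cast
    ring
  obtain ⟨hlow, hupp⟩ := integral_greenKernel_bounds k ht₀ ht₁
  have hk' : (0 : ℝ) < k := by exact_mod_cast hk
  rw [hgfun, one_div_mul_eq_div, one_div_mul_eq_div]
  constructor
  · rw [div_lt_div_iff₀ (by positivity) (by positivity)]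
    nlinarith
  · rw [div_lt_div_iff₀ (by positivity) (by positivity)]
    nlinarith

end GreenFunctionBounds

/-- bounds for `q(t) = t^{n-2} g(t)/(1-t²)^{n-1}` on `(0,1)`. -/
theorem stmt_6 (n : ℕ) (hn : 3 ≤ n) (t : ℝ) (ht : t ∈ Ioo (0 : ℝ) 1) :
    (1 / (2 * (n : ℝ) * ((n : ℝ) - 1)) < t ^ (n - 2) * gfun n t / (1 - t ^ 2) ^ (n - 1) ∧
      t ^ (n - 2) * gfun n t / (1 - t ^ 2) ^ (n - 1) < 1 / ((n : ℝ) * ((n : ℝ) - 2))) ∧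
    (1 / (2 * (n : ℝ) * ((n : ℝ) - 1)) * ((1 - t ^ 2) ^ (n - 1) / t ^ (n - 2)) < gfun n t ∧
      gfun n t < 1 / ((n : ℝ) * ((n : ℝ) - 2)) * ((1 - t ^ 2) ^ (n - 1) / t ^ (n - 2))) := by
  obtain ⟨ht₀, ht₁⟩ := ht
  obtain ⟨k, rfl⟩ : ∃ k, n = k + 2 := ⟨n - 2, by omega⟩
  obtain ⟨hlow, hupp⟩ := gfun_bounds k (by omega) ht₀ ht₁
  have hF : 0 < (1 - t ^ 2) ^ (k + 1) / t ^ k := by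
    have : 0 < 1 - t ^ 2 := by nlinarith
    positivity
  have hq : t ^ k * gfun (k + 2) t / (1 - t ^ 2) ^ (k + 1)
      = gfun (k + 2) t / ((1 - t ^ 2) ^ (k + 1) / t ^ k) := by
    field_simp
  simp only [Nat.add_sub_cancel, show k + 2 - 1 = k + 1 by omega, Nat.cast_add, Nat.cast_ofNat,
    add_sub_cancel_right, show (k : ℝ) + 2 - 1 = k + 1 by ring]
  rw [hq, lt_div_iff₀ hF, div_lt_iff₀ hF]
  exact ⟨⟨hlow, hupp⟩, hlow, hupp⟩
end

section
/- Let n ≥ 3 and let ψ ∈ C(𝔹ⁿ,ℝⁿ) satisfy ∫_{𝔹ⁿ} (1−|x|²)^{n−1} |ψ(x)| dτ(x) ≤ μ₁ for some constant μ₁ ≥ 0, and suppose |ψ(x)| ≤ K for all x with |x| < 1/2, where K = sup{ |ψ(x)| : |x| < 1/2 }. Then ∫_{𝔹ⁿ} g(|x|) |ψ(x)| dτ(x) ≤ K / (2n(n−1)(3/4)ⁿ) + 2^{n−1} μ₁ / (n(n−1)); in particular this integral is finite. -/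
open MeasureTheory Metric Set

/-!
Split the ball at radius `1/2`. For `1/2 ≤ s ≤ 1` we have `(2s)ⁿ ≥ 1`, so the integrand of `g`
is at most `2ⁿ s (1-s²)^{n-2}`, which integrates to `g(r) ≤ 2^{n-1}(1-r²)^{n-1}/(n(n-1))`;
hence the part `1/2 ≤ |x| < 1` is controlled by `μ₁`. On `|x| < 1/2` the density of `τ`
is at most `(4/3)ⁿ` and `|ψ| ≤ K`, while Fubini and `ν(|x| < s) = sⁿ` give
`∫_𝔹 g(|x|) dν = (1/n) ∫₀¹ s (1-s²)^{n-2} ds = 1/(2n(n-1))`.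
-/

open scoped ENNReal

noncomputable def gfunIntegrand (n : ℕ) (s : ℝ) : ℝ := (1 - s ^ 2) ^ (n - 2) / s ^ (n - 1)

theorem gfun_eq (n : ℕ) (r : ℝ) :
    gfun n r = 1 / n * ∫ s in r..1, gfunIntegrand n s := rfl

theorem integral_mul_one_sub_sq_pow (m : ℕ) (a b : ℝ) :
    ∫ s in a..b, s * (1 - s ^ 2) ^ m
      = ((1 - a ^ 2) ^ (m + 1) - (1 - b ^ 2) ^ (m + 1)) / (2 * (m + 1)) := by
  have hderiv (s : ℝ) : HasDerivAt (fun t : ℝ => -(1 - t ^ 2) ^ (m + 1) / (2 * (m + 1)))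
      (s * (1 - s ^ 2) ^ m) s := by
    refine ((((hasDerivAt_pow 2 s).const_sub 1).pow (m + 1)).neg.div_const
      (2 * (m + 1) : ℝ)).congr_deriv ?_
    simp only [Nat.add_sub_cancel, Nat.cast_ofNat, Nat.cast_succ]
    field_simp
    ring
  rw [intervalIntegral.integral_eq_sub_of_hasDerivAt (fun s _ => hderiv s)
    ((by fun_prop : Continuous fun s : ℝ => s * (1 - s ^ 2) ^ m).intervalIntegrable _ _)]
  ring

theorem pow_mul_gfunIntegrand {n : ℕ} (hn : 1 ≤ n) {s : ℝ} (hs : s ≠ 0) :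
    s ^ n * gfunIntegrand n s = s * (1 - s ^ 2) ^ (n - 2) := by
  obtain ⟨k, rfl⟩ := Nat.exists_eq_add_of_le' hn
  simp only [gfunIntegrand, Nat.add_sub_cancel, pow_succ]
  field_simp

theorem measurable_gfunIntegrand (n : ℕ) : Measurable (gfunIntegrand n) := by
  unfold gfunIntegrand; fun_prop

theorem gfunIntegrand_nonneg (n : ℕ) {s : ℝ} (hs0 : 0 ≤ s) (hs1 : s ≤ 1) :
    0 ≤ gfunIntegrand n s :=
  div_nonneg (pow_nonneg (by nlinarith) _) (pow_nonneg hs0 _)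

theorem intervalIntegrable_gfunIntegrand (n : ℕ) {a b : ℝ} (ha : 0 < a) (hb : 0 < b) :
    IntervalIntegrable (gfunIntegrand n) volume a b := by
  refine ContinuousOn.intervalIntegrable (ContinuousOn.div (by fun_prop) (by fun_prop) ?_)
  intro s hs
  exact pow_ne_zero _ (lt_of_lt_of_le (lt_min ha hb) hs.1).ne'

theorem gfun_nonneg (n : ℕ) {r : ℝ} (hr0 : 0 ≤ r) (hr1 : r ≤ 1) : 0 ≤ gfun n r :=
  mul_nonneg (by positivity) <| intervalIntegral.integral_nonneg hr1 fun s hs =>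
    gfunIntegrand_nonneg n (hr0.trans hs.1) hs.2

theorem gfunIntegrand_le_of_half_le {n : ℕ} (hn : 1 ≤ n) {s : ℝ} (hs : 1 / 2 ≤ s)
    (hs1 : s ≤ 1) : gfunIntegrand n s ≤ 2 ^ n * (s * (1 - s ^ 2) ^ (n - 2)) := by
  have h2s : 1 ≤ (2 * s) ^ n := one_le_pow₀ (by linarith)
  have hφ : 0 ≤ gfunIntegrand n s := gfunIntegrand_nonneg n (by linarith) hs1
  calc gfunIntegrand n s ≤ (2 * s) ^ n * gfunIntegrand n s := le_mul_of_one_le_left hφ h2s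
    _ = 2 ^ n * (s * (1 - s ^ 2) ^ (n - 2)) := by
      rw [mul_pow, mul_assoc, pow_mul_gfunIntegrand hn (by positivity)]

theorem gfun_le_of_half_le {n : ℕ} (hn : 2 ≤ n) {r : ℝ} (hr : 1 / 2 ≤ r) (hr1 : r ≤ 1) :
    gfun n r ≤ 2 ^ (n - 1) / (n * (n - 1)) * (1 - r ^ 2) ^ (n - 1) := by
  obtain ⟨m, rfl⟩ := Nat.exists_eq_add_of_le' hn
  have hint : ∫ s in r..1, gfunIntegrand (m + 2) s
      ≤ ∫ s in r..1, 2 ^ (m + 2) * (s * (1 - s ^ 2) ^ m) :=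
    intervalIntegral.integral_mono_on hr1
      (intervalIntegrable_gfunIntegrand _ (by linarith) one_pos)
      ((by fun_prop : Continuous fun s : ℝ => 2 ^ (m + 2) * (s * (1 - s ^ 2) ^ m)).intervalIntegrable
        _ _)
      fun s hs => gfunIntegrand_le_of_half_le (by omega) (hr.trans hs.1) hs.2
  rw [intervalIntegral.integral_const_mul, integral_mul_one_sub_sq_pow] at hint
  rw [gfun_eq]
  calc 1 / ((m + 2 : ℕ) : ℝ) * ∫ s in r..1, gfunIntegrand (m + 2) s
      ≤ 1 / ((m + 2 : ℕ) : ℝ) * (2 ^ (m + 2) * (((1 - r ^ 2) ^ (m + 1) - (1 - 1 ^ 2) ^ (m + 1))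
          / (2 * (m + 1)))) := by gcongr
    _ = _ := by
      have hm : (m : ℝ) + 1 ≠ 0 := by positivity
      simp only [show m + 2 - 1 = m + 1 by omega]
      push_cast
      rw [show (m : ℝ) + 2 - 1 = m + 1 by ring]
      field_simp
      ring

theorem ofReal_integral_le_lintegral_ofReal {α : Type*} [MeasurableSpace α] {μ : Measure α}
    {f : α → ℝ} (hf : 0 ≤ᵐ[μ] f) :
    ENNReal.ofReal (∫ x, f x ∂μ) ≤ ∫⁻ x, ENNReal.ofReal (f x) ∂μ := by
  by_cases hfi : Integrable f μ
  · exact (ofReal_integral_eq_lintegral_ofReal hfi hf).le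
  · simp [integral_undef hfi]

-- Only an inequality: at `r = 0` the integral defining `g` diverges and takes the junk value `0`.
theorem ofReal_gfun_le_lintegral (n : ℕ) {r : ℝ} (hr0 : 0 ≤ r) (hr1 : r ≤ 1) :
    ENNReal.ofReal (gfun n r)
      ≤ ENNReal.ofReal (1 / n) * ∫⁻ s in Ioc r 1, ENNReal.ofReal (gfunIntegrand n s) := by
  rw [gfun_eq, ENNReal.ofReal_mul (by positivity), intervalIntegral.integral_of_le hr1]
  gcongr
  refine ofReal_integral_le_lintegral_ofReal ?_
  filter_upwards [ae_restrict_mem measurableSet_Ioc] with s hs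
  exact gfunIntegrand_nonneg n (hr0.trans hs.1.le) hs.2

theorem setLIntegral_ball_setLIntegral_Ioc_norm {E : Type*} [NormedAddCommGroup E]
    [MeasurableSpace E] [OpensMeasurableSpace E] (μ : Measure E) [SFinite μ] {f : ℝ → ℝ≥0∞}
    (hf : Measurable f) (R : ℝ) :
    ∫⁻ x in ball 0 R, (∫⁻ s in Ioc ‖x‖ R, f s) ∂μ
      = ∫⁻ s in Ioc 0 R, μ (ball 0 s) * f s := by
  have hIoc (x : E) : ∫⁻ s in Ioc ‖x‖ R, f s = ∫⁻ s in Ioc 0 R, (Ioi ‖x‖).indicator f s := by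
    rw [lintegral_indicator measurableSet_Ioi, Measure.restrict_restrict measurableSet_Ioi,
      inter_comm, Ioc_inter_Ioi, max_eq_right (norm_nonneg x)]
  have hball (s : ℝ) (hs : s ∈ Ioc 0 R) :
      ∫⁻ x in ball 0 R, (Ioi ‖x‖).indicator f s ∂μ = μ (ball 0 s) * f s := by
    have : (fun x : E => (Ioi ‖x‖).indicator f s) = (ball 0 s).indicator fun _ => f s := by
      ext x; by_cases h : ‖x‖ < s <;> simp [h]
    rw [this, lintegral_indicator measurableSet_ball, Measure.restrict_restrict measurableSet_ball,
      setLIntegral_const, inter_eq_self_of_subset_left (ball_subset_ball hs.2), mul_comm]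
  simp_rw [hIoc]
  rw [lintegral_lintegral_swap, setLIntegral_congr_fun measurableSet_Ioc hball]
  have : Function.uncurry (fun (x : E) (s : ℝ) => (Ioi ‖x‖).indicator f s)
      = {p : E × ℝ | ‖p.1‖ < p.2}.indicator fun p => f p.2 := by
    ext ⟨x, s⟩; simp [indicator_apply]
  rw [this]
  exact ((hf.comp measurable_snd).indicator
    (measurableSet_lt measurable_fst.norm measurable_snd)).aemeasurable

instance (n : ℕ) : SFinite (nuMeasure n) := by
  unfold nuMeasure; infer_instance

theorem nuMeasure_ball {n : ℕ} (hn : 0 < n) {r : ℝ} (hr : 0 ≤ r) :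
    nuMeasure n (ball 0 r) = ENNReal.ofReal (r ^ n) := by
  have : NeZero n := ⟨hn.ne'⟩
  rw [nuMeasure, Measure.smul_apply, Measure.addHaar_ball _ _ hr, finrank_euclideanSpace_fin,
    smul_eq_mul, mul_left_comm, ENNReal.inv_mul_cancel (measure_ball_pos _ _ one_pos).ne'
      measure_ball_lt_top.ne, mul_one]

theorem setLIntegral_ball_one_ofReal_gfun_le {n : ℕ} (hn : 2 ≤ n) :
    ∫⁻ x in ball (0 : En n) 1, ENNReal.ofReal (gfun n ‖x‖) ∂nuMeasure n
      ≤ ENNReal.ofReal (1 / (2 * n * (n - 1))) := by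
  obtain ⟨m, rfl⟩ := Nat.exists_eq_add_of_le' hn
  have hlayer : ∀ s ∈ Ioc (0 : ℝ) 1, nuMeasure (m + 2) (ball 0 s)
      * ENNReal.ofReal (gfunIntegrand (m + 2) s) = ENNReal.ofReal (s * (1 - s ^ 2) ^ m) := by
    intro s hs
    rw [nuMeasure_ball (by omega) hs.1.le, ← ENNReal.ofReal_mul (pow_nonneg hs.1.le _),
      pow_mul_gfunIntegrand (by omega) hs.1.ne', Nat.add_sub_cancel]
  have hpoly : ∫⁻ s in Ioc (0 : ℝ) 1, ENNReal.ofReal (s * (1 - s ^ 2) ^ m)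
      = ENNReal.ofReal (1 / (2 * (m + 1))) := by
    rw [← ofReal_integral_eq_lintegral_ofReal
      (by fun_prop : Continuous fun s : ℝ => s * (1 - s ^ 2) ^ m).integrableOn_Ioc,
      ← intervalIntegral.integral_of_le zero_le_one, integral_mul_one_sub_sq_pow]
    · norm_num
    · filter_upwards [ae_restrict_mem measurableSet_Ioc] with s hs
      exact mul_nonneg hs.1.le (pow_nonneg (by nlinarith [hs.1, hs.2]) _)
  calc ∫⁻ x in ball (0 : En (m + 2)) 1, ENNReal.ofReal (gfun (m + 2) ‖x‖) ∂nuMeasure (m + 2)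
      ≤ ∫⁻ x in ball (0 : En (m + 2)) 1, ENNReal.ofReal (1 / (m + 2 : ℕ)) *
          (∫⁻ s in Ioc ‖x‖ 1, ENNReal.ofReal (gfunIntegrand (m + 2) s)) ∂nuMeasure (m + 2) :=
        setLIntegral_mono' measurableSet_ball fun x hx =>
          ofReal_gfun_le_lintegral _ (norm_nonneg x) (mem_ball_zero_iff.1 hx).le
    _ = ENNReal.ofReal (1 / (m + 2 : ℕ)) * ENNReal.ofReal (1 / (2 * (m + 1))) := by
      rw [lintegral_const_mul' _ _ ENNReal.ofReal_ne_top,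
        setLIntegral_ball_setLIntegral_Ioc_norm _ (measurable_gfunIntegrand _).ennreal_ofReal,
        setLIntegral_congr_fun measurableSet_Ioc hlayer, hpoly]
    _ = ENNReal.ofReal (1 / (2 * (m + 2 : ℕ) * ((m + 2 : ℕ) - 1))) := by
      rw [← ENNReal.ofReal_mul (by positivity)]
      congr 1
      push_cast
      rw [show (m : ℝ) + 2 - 1 = m + 1 by ring]
      field_simp

theorem tauMeasure_restrict_ball_le (n : ℕ) {r : ℝ} (hr : r < 1) :
    (tauMeasure n).restrict (ball 0 r)
      ≤ ENNReal.ofReal ((1 - r ^ 2) ^ n)⁻¹ • (nuMeasure n).restrict (ball 0 r) := by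
  rw [tauMeasure, restrict_withDensity measurableSet_ball, ← withDensity_const]
  refine withDensity_mono ?_
  filter_upwards [ae_restrict_mem measurableSet_ball] with x hx
  have hxr : ‖x‖ < r := mem_ball_zero_iff.1 hx
  have hr0 : 0 < 1 - r ^ 2 := by nlinarith [norm_nonneg x]
  have hxr2 : 1 - r ^ 2 ≤ 1 - ‖x‖ ^ 2 := by nlinarith [norm_nonneg x]
  exact ENNReal.ofReal_le_ofReal <| inv_anti₀ (pow_pos hr0 n) (pow_le_pow_left₀ hr0.le hxr2 n)

theorem setLIntegral_ball_half_gfun_mul_norm_le {F : Type*} [SeminormedAddGroup F] {n : ℕ}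
    (hn : 2 ≤ n) {ψ : En n → F} {K : ℝ} (hK0 : 0 ≤ K) (hK : ∀ x : En n, ‖x‖ < 1 / 2 → ‖ψ x‖ ≤ K) :
    ∫⁻ x in ball (0 : En n) (1 / 2), ENNReal.ofReal (gfun n ‖x‖ * ‖ψ x‖) ∂tauMeasure n
      ≤ ENNReal.ofReal (K / (2 * n * (n - 1) * (3 / 4) ^ n)) := by
  have hpoint : ∀ x ∈ ball (0 : En n) (1 / 2),
      ENNReal.ofReal (gfun n ‖x‖ * ‖ψ x‖) ≤ ENNReal.ofReal K * ENNReal.ofReal (gfun n ‖x‖) := by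
    intro x hx
    have hx' : ‖x‖ < 1 / 2 := mem_ball_zero_iff.1 hx
    rw [← ENNReal.ofReal_mul hK0, mul_comm K]
    exact ENNReal.ofReal_le_ofReal <|
      mul_le_mul_of_nonneg_left (hK x hx') (gfun_nonneg n (norm_nonneg x) (by linarith))
  calc ∫⁻ x in ball (0 : En n) (1 / 2), ENNReal.ofReal (gfun n ‖x‖ * ‖ψ x‖) ∂tauMeasure n
      ≤ ∫⁻ x in ball (0 : En n) (1 / 2), ENNReal.ofReal K * ENNReal.ofReal (gfun n ‖x‖)
          ∂tauMeasure n := setLIntegral_mono' measurableSet_ball hpoint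
    _ ≤ ∫⁻ x, ENNReal.ofReal K * ENNReal.ofReal (gfun n ‖x‖)
          ∂(ENNReal.ofReal ((1 - (1 / 2) ^ 2) ^ n)⁻¹ • (nuMeasure n).restrict (ball 0 (1 / 2))) :=
        lintegral_mono' (tauMeasure_restrict_ball_le n (by norm_num)) le_rfl
    _ ≤ ENNReal.ofReal ((3 / 4) ^ n)⁻¹
          * (ENNReal.ofReal K * ENNReal.ofReal (1 / (2 * n * (n - 1)))) := by
      rw [lintegral_smul_measure, lintegral_const_mul' _ _ ENNReal.ofReal_ne_top, smul_eq_mul]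
      norm_num only
      gcongr
      exact (lintegral_mono_set (ball_subset_ball (by norm_num))).trans
        (setLIntegral_ball_one_ofReal_gfun_le hn)
    _ = ENNReal.ofReal (K / (2 * n * (n - 1) * (3 / 4) ^ n)) := by
      rw [← ENNReal.ofReal_mul hK0, ← ENNReal.ofReal_mul (by positivity)]
      congr 1
      field_simp

theorem setLIntegral_annulus_gfun_mul_norm_le {F : Type*} [SeminormedAddGroup F] {n : ℕ}
    (hn : 2 ≤ n) (μ : Measure (En n)) (ψ : En n → F) :
    ∫⁻ x in ball (0 : En n) 1 \ ball 0 (1 / 2), ENNReal.ofReal (gfun n ‖x‖ * ‖ψ x‖) ∂μ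
      ≤ ENNReal.ofReal (2 ^ (n - 1) / (n * (n - 1)))
        * ∫⁻ x in ball (0 : En n) 1, ENNReal.ofReal ((1 - ‖x‖ ^ 2) ^ (n - 1) * ‖ψ x‖) ∂μ := by
  have hC : (0 : ℝ) ≤ 2 ^ (n - 1) / (n * (n - 1)) := by
    have : (1 : ℝ) ≤ n := by exact_mod_cast (by omega : 1 ≤ n)
    have : (0 : ℝ) ≤ n - 1 := by linarith
    positivity
  rw [← lintegral_const_mul' _ _ ENNReal.ofReal_ne_top]
  refine (setLIntegral_mono' (measurableSet_ball.diff measurableSet_ball) fun x hx => ?_).trans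
    (lintegral_mono_set sdiff_subset)
  have hx1 : ‖x‖ < 1 := mem_ball_zero_iff.1 hx.1
  have hx2 : 1 / 2 ≤ ‖x‖ := not_lt.1 fun h => hx.2 (mem_ball_zero_iff.2 h)
  rw [← ENNReal.ofReal_mul hC, ← mul_assoc]
  exact ENNReal.ofReal_le_ofReal <|
    mul_le_mul_of_nonneg_right (gfun_le_of_half_le hn hx2 hx1.le) (norm_nonneg _)

theorem stmt_7_general (n : ℕ) (hn : 3 ≤ n) (ψ : En n → En n)
    (μ₁ : ℝ) (hμ₁ : 0 ≤ μ₁)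
    (hint : ∫⁻ x in ball (0 : En n) 1,
        ENNReal.ofReal ((1 - ‖x‖ ^ 2) ^ (n - 1) * ‖ψ x‖) ∂(tauMeasure n)
          ≤ ENNReal.ofReal μ₁)
    (K : ℝ) (hK0 : 0 ≤ K) (hK : ∀ x : En n, ‖x‖ < 1 / 2 → ‖ψ x‖ ≤ K) :
    ∫⁻ x in ball (0 : En n) 1,
        ENNReal.ofReal (gfun n ‖x‖ * ‖ψ x‖) ∂(tauMeasure n)
      ≤ ENNReal.ofReal
          (K / (2 * (n : ℝ) * ((n : ℝ) - 1) * (3 / 4) ^ n)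
            + 2 ^ (n - 1) * μ₁ / ((n : ℝ) * ((n : ℝ) - 1))) := by
  have hn2 : 2 ≤ n := by omega
  have hn1 : (0 : ℝ) < n - 1 := by
    have : (2 : ℝ) ≤ n := by exact_mod_cast hn2
    linarith
  have hannulus := (setLIntegral_annulus_gfun_mul_norm_le hn2 (tauMeasure n) ψ).trans
    (mul_le_mul_right hint _)
  rw [← ENNReal.ofReal_mul (div_nonneg (by positivity) (by positivity)), div_mul_eq_mul_div]
    at hannulus
  rw [← lintegral_inter_add_sdiff _ _ (measurableSet_ball (x := 0) (ε := 1 / 2)),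
    inter_eq_self_of_subset_right (ball_subset_ball (by norm_num)),
    ENNReal.ofReal_add (div_nonneg hK0 (by positivity))
      (div_nonneg (by positivity) (by positivity))]
  exact add_le_add (setLIntegral_ball_half_gfun_mul_norm_le hn2 hK0 hK) hannulus

/-- `∫_{𝔹ⁿ} g(|x|)|ψ(x)| dτ(x)` is finite, with an explicit bound. -/
theorem stmt_7 (n : ℕ) (hn : 3 ≤ n) (ψ : En n → En n)
    (hψc : ContinuousOn ψ (ball (0 : En n) 1))
    (μ₁ : ℝ) (hμ₁ : 0 ≤ μ₁)
    (hint : ∫⁻ x in ball (0 : En n) 1,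
        ENNReal.ofReal ((1 - ‖x‖ ^ 2) ^ (n - 1) * ‖ψ x‖) ∂(tauMeasure n)
          ≤ ENNReal.ofReal μ₁)
    (K : ℝ) (hK0 : 0 ≤ K) (hK : ∀ x : En n, ‖x‖ < 1 / 2 → ‖ψ x‖ ≤ K) :
    ∫⁻ x in ball (0 : En n) 1,
        ENNReal.ofReal (gfun n ‖x‖ * ‖ψ x‖) ∂(tauMeasure n)
      ≤ ENNReal.ofReal
          (K / (2 * (n : ℝ) * ((n : ℝ) - 1) * (3 / 4) ^ n)
            + 2 ^ (n - 1) * μ₁ / ((n : ℝ) * ((n : ℝ) - 1))) :=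
  stmt_7_general n hn ψ μ₁ hμ₁ hint K hK0 hK
end

section
/- For an integer n ≥ 3 define I₁(s) = ∫₀¹ F(1, (4−n)/2; n/2; ts) dt. Then: (a) if n ≥ 4, there exists a constant μ depending only on n such that |I₁(s)| ≤ μ for all s ∈ [0,1); (b) if n = 3 and s₀ ∈ (0,1), then |I₁(s)| ≤ 1/(1−s₀) for all s ∈ [0,s₀]. -/
open MeasureTheory Metric Set

/-! With `a = 1` the factor `(1)_k = k!` cancels, so `F(1,b;c;x) = ∑ (b)_k/(c)_k xᵏ`.
For `n ≥ 4` we have `b = (4-n)/2 ≤ 0` and `c - b = n - 2 ≥ 2`; once `b + k ≥ 0` the ratio of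
consecutive coefficients is `(b+k)/(c+k) ≤ (k+1)²/(k+2)²`, so the coefficients are `O(k⁻²)` and
`F` is bounded on `[-1, 1]` by their absolute sum. For `n = 3` we have `0 ≤ b ≤ c`, so the
coefficients lie in `[0, 1]` and `F(x) ≤ 1/(1-x)`. Both are pointwise bounds on `[0, s]`,
which the average `∫₀¹ F(ts) dt` inherits. -/

lemma poch_succ (a : ℝ) (k : ℕ) : poch a (k + 1) = poch a k * (a + k) :=
  ascPochhammer_succ_eval k a

lemma poch_one (k : ℕ) : poch 1 k = k.factorial :=
  ascPochhammer_eval_one ℝ k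

lemma poch_nonneg {a : ℝ} (ha : 0 ≤ a) (k : ℕ) : 0 ≤ poch a k := by
  induction k with
  | zero => simp [poch]
  | succ k ih => rw [poch_succ]; positivity

lemma poch_le_poch {a b : ℝ} (ha : 0 ≤ a) (hab : a ≤ b) (k : ℕ) : poch a k ≤ poch b k := by
  induction k with
  | zero => simp [poch]
  | succ k ih =>
    rw [poch_succ, poch_succ]
    exact mul_le_mul ih (by linarith) (by positivity) ((poch_nonneg ha k).trans ih)

lemma hyperF_one_left (b c x : ℝ) :
    hyperF 1 b c x = ∑' k : ℕ, poch b k / poch c k * x ^ k := by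
  refine tsum_congr fun k => ?_
  rw [poch_one, mul_div_mul_left _ _ (by positivity)]

lemma poch_div_poch_succ (b c : ℝ) (k : ℕ) :
    poch b (k + 1) / poch c (k + 1) = poch b k / poch c k * ((b + k) / (c + k)) := by
  rw [poch_succ, poch_succ, mul_div_mul_comm]

lemma summable_abs_poch_div_poch {b c : ℝ} (hb : b ≤ 0) (hbc : b + 2 ≤ c) :
    Summable fun k : ℕ => |poch b k / poch c k| := by
  set f : ℕ → ℝ := fun k => |poch b k / poch c k| * ((k : ℝ) + 1) ^ 2
  set K := ⌈-b⌉₊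
  have f_succ_le : ∀ k, K ≤ k → f (k + 1) ≤ f k := by
    intro k hk
    have hbk : 0 ≤ b + k := by
      have := (Nat.le_ceil (-b)).trans (Nat.cast_le.mpr hk : (K : ℝ) ≤ k); linarith
    have hck : 0 < c + k := by linarith
    have ratio : (b + k) / (c + k) * ((k : ℝ) + 2) ^ 2 ≤ ((k : ℝ) + 1) ^ 2 := by
      rw [div_mul_eq_mul_div, div_le_iff₀ hck]
      nlinarith
    simp only [f, poch_div_poch_succ, abs_mul, abs_of_nonneg (div_nonneg hbk hck.le)]
    push_cast
    rw [mul_assoc, show (k : ℝ) + 1 + 1 = k + 2 by ring]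
    gcongr
  have f_le : ∀ k, K ≤ k → f k ≤ f K := by
    intro k hk
    induction k, hk using Nat.le_induction with
    | base => rfl
    | succ k hk ih => exact (f_succ_le k hk).trans ih
  have inv_sq_summable : Summable fun k : ℕ => 1 / ((k : ℝ) + 1) ^ 2 := by
    exact_mod_cast (summable_nat_add_iff 1).mpr (Real.summable_one_div_nat_pow.mpr one_lt_two)
  refine Summable.of_norm_bounded_eventually_nat (inv_sq_summable.mul_left (f K)) ?_
  filter_upwards [Filter.eventually_ge_atTop K] with k hk
  rw [Real.norm_eq_abs, abs_abs, mul_one_div, le_div_iff₀ (by positivity)]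
  exact f_le k hk

lemma abs_tsum_mul_pow_le {a : ℕ → ℝ} (ha : Summable fun k => |a k|) {x : ℝ} (hx : |x| ≤ 1) :
    |∑' k, a k * x ^ k| ≤ ∑' k, |a k| := by
  have term_le : ∀ k, ‖a k * x ^ k‖ ≤ |a k| := fun k => by
    rw [Real.norm_eq_abs, abs_mul, abs_pow]
    exact mul_le_of_le_one_right (abs_nonneg _) (pow_le_one₀ (abs_nonneg x) hx)
  exact tsum_of_norm_bounded ha.hasSum term_le

lemma abs_hyperF_one_le {b c : ℝ} (hb : b ≤ 0) (hbc : b + 2 ≤ c) {x : ℝ}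
    (hx : |x| ≤ 1) : |hyperF 1 b c x| ≤ ∑' k : ℕ, |poch b k / poch c k| := by
  rw [hyperF_one_left]
  exact abs_tsum_mul_pow_le (summable_abs_poch_div_poch hb hbc) hx

lemma abs_hyperF_one_le_inv_one_sub {b c : ℝ} (hb : 0 ≤ b) (hbc : b ≤ c) {x : ℝ}
    (hx0 : 0 ≤ x) (hx1 : x < 1) : |hyperF 1 b c x| ≤ (1 - x)⁻¹ := by
  have coeff_mem : ∀ k, 0 ≤ poch b k / poch c k ∧ poch b k / poch c k ≤ 1 := fun k => by
    have hb0 := poch_nonneg hb k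
    have hbc := poch_le_poch hb hbc k
    exact ⟨div_nonneg hb0 (hb0.trans hbc), div_le_one_of_le₀ hbc (hb0.trans hbc)⟩
  have geom := summable_geometric_of_lt_one hx0 hx1
  have term_le : ∀ k, poch b k / poch c k * x ^ k ≤ x ^ k := fun k =>
    mul_le_of_le_one_left (pow_nonneg hx0 k) (coeff_mem k).2
  have term_nonneg : ∀ k, 0 ≤ poch b k / poch c k * x ^ k := fun k =>
    mul_nonneg (coeff_mem k).1 (pow_nonneg hx0 k)
  rw [hyperF_one_left, abs_of_nonneg (tsum_nonneg term_nonneg),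
    ← tsum_geometric_of_lt_one hx0 hx1]
  exact Summable.tsum_le_tsum term_le (geom.of_nonneg_of_le term_nonneg term_le) geom

lemma abs_integral_comp_mul_le {f : ℝ → ℝ} {s C : ℝ} (hs : 0 ≤ s)
    (hf : ∀ y ∈ Icc 0 s, |f y| ≤ C) : |∫ t in (0 : ℝ)..1, f (t * s)| ≤ C := by
  have bound : ∀ t ∈ uIoc (0 : ℝ) 1, ‖f (t * s)‖ ≤ C := fun t ht => by
    rw [uIoc_of_le zero_le_one] at ht
    exact hf _ ⟨mul_nonneg ht.1.le hs, mul_le_of_le_one_left hs ht.2⟩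
  simpa using intervalIntegral.norm_integral_le_of_norm_le_const bound

theorem stmt_14_general (n : ℕ) :
    ((4 ≤ n) → ∃ μ : ℝ, ∀ s ∈ Ico (0 : ℝ) 1,
      |∫ t in (0 : ℝ)..1, hyperF 1 ((4 - (n : ℝ)) / 2) ((n : ℝ) / 2) (t * s)| ≤ μ) ∧
    (n = 3 → ∀ s₀ ∈ Ioo (0 : ℝ) 1, ∀ s ∈ Icc (0 : ℝ) s₀,
      |∫ t in (0 : ℝ)..1, hyperF 1 ((4 - (n : ℝ)) / 2) ((n : ℝ) / 2) (t * s)|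
        ≤ 1 / (1 - s₀)) := by
  refine ⟨fun hn => ?_, fun hn s₀ hs₀ s hs => ?_⟩
  · have hn' : (4 : ℝ) ≤ n := by exact_mod_cast hn
    refine ⟨∑' k : ℕ, |poch ((4 - n) / 2) k / poch (n / 2) k|,
      fun s hs => abs_integral_comp_mul_le hs.1 fun y hy => ?_⟩
    refine abs_hyperF_one_le (by linarith) (by linarith) ?_
    rw [abs_of_nonneg hy.1]
    exact hy.2.trans hs.2.le
  · subst hn
    refine abs_integral_comp_mul_le hs.1 fun y hy => ?_
    calc |hyperF 1 ((4 - ((3 : ℕ) : ℝ)) / 2) (((3 : ℕ) : ℝ) / 2) y|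
        ≤ (1 - y)⁻¹ := abs_hyperF_one_le_inv_one_sub (by norm_num) (by norm_num) hy.1
          (hy.2.trans_lt (hs.2.trans_lt hs₀.2))
      _ ≤ 1 / (1 - s₀) := by
          rw [one_div]
          exact inv_anti₀ (by linarith [hs₀.2]) (by linarith [hy.2, hs.2])

/-- bounds for `I₁(s) = ∫₀¹ F(1,(4-n)/2; n/2; ts) dt`. -/
theorem stmt_14 (n : ℕ) (hn : 3 ≤ n) :
    ((4 ≤ n) → ∃ μ : ℝ, ∀ s ∈ Ico (0 : ℝ) 1,
      |∫ t in (0 : ℝ)..1, hyperF 1 ((4 - (n : ℝ)) / 2) ((n : ℝ) / 2) (t * s)| ≤ μ) ∧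
    (n = 3 → ∀ s₀ ∈ Ioo (0 : ℝ) 1, ∀ s ∈ Icc (0 : ℝ) s₀,
      |∫ t in (0 : ℝ)..1, hyperF 1 ((4 - (n : ℝ)) / 2) ((n : ℝ) / 2) (t * s)|
        ≤ 1 / (1 - s₀)) :=
  stmt_14_general n
end

section
/- Let n ≥ 3. Then there exists a constant μ₅ depending only on n such that for every x ∈ 𝔹ⁿ, J_n(x) := ∫_{𝔹ⁿ} 1/( |y|^{n−2} [x,y]² ) dν(y) ≤ μ₅. -/
open MeasureTheory Metric Set

/-! The bracket satisfies `[x,y] ≥ 1 - |x||y|` (Cauchy–Schwarz) and `[x,y] ≥ |y - x|`. Hence the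
integrand is at most `4 |y|^{2-n}` where `|y| ≤ 1/2` and at most `2^{n-2} |y - x|^{-2}` where
`|y| > 1/2`. Both singularities are integrable in dimension `n ≥ 3`, and after translating the
second one by `x` both bounds are integrals over fixed balls, independent of `x`. -/

open scoped ENNReal RealInnerProductSpace

theorem setLIntegral_ball_comp_sub {E : Type*} [NormedAddCommGroup E] [MeasurableSpace E]
    [OpensMeasurableSpace E] [MeasurableAdd E] (μ : Measure E) [μ.IsAddRightInvariant]
    (g : E → ℝ≥0∞) (x : E) (R : ℝ) :
    ∫⁻ y in ball x R, g (y - x) ∂μ = ∫⁻ z in ball 0 R, g z ∂μ := by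
  rw [← lintegral_indicator measurableSet_ball, ← lintegral_indicator measurableSet_ball,
    ← lintegral_sub_right_eq_self (ball 0 R |>.indicator g) x]
  congr 1 with y
  simp only [indicator, mem_ball_iff_norm, sub_zero]

theorem setLIntegral_ball_div_norm_pow_lt_top {E : Type*} [NormedAddCommGroup E]
    [NormedSpace ℝ E] [FiniteDimensional ℝ E] [MeasurableSpace E] [BorelSpace E]
    (μ : Measure E) [μ.IsAddHaarMeasure] {k : ℕ} (hk : k < Module.finrank ℝ E) (c R : ℝ) :
    ∫⁻ y in ball (0 : E) R, ENNReal.ofReal (c / ‖y‖ ^ k) ∂μ < ∞ := by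
  have hloc : LocallyIntegrable (fun y : E => c / ‖y‖ ^ k) μ := by
    refine locallyIntegrable_of_norm_le_rpow (by omega) (α := k) (C := |c|) (by exact_mod_cast hk)
      (Filter.Eventually.of_forall fun y => ?_)
      (measurable_const.div (measurable_norm.pow_const k)).aestronglyMeasurable
    rw [Real.rpow_neg (norm_nonneg y), Real.rpow_natCast, norm_div, norm_pow, norm_norm,
      Real.norm_eq_abs, div_eq_mul_inv]
  exact ((hloc.integrableOn_isCompact (isCompact_closedBall 0 R)).mono_set
    ball_subset_closedBall).setLIntegral_lt_top

theorem sq_one_sub_norm_mul_norm_le {F : Type*} [NormedAddCommGroup F] [InnerProductSpace ℝ F]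
    (a x : F) : (1 - ‖a‖ * ‖x‖) ^ 2 ≤ 1 - 2 * ⟪a, x⟫ + ‖a‖ ^ 2 * ‖x‖ ^ 2 := by
  nlinarith [real_inner_le_norm a x]

section Bracket

variable {n : ℕ}

theorem qbracket_sq (a x : En n) : qbracket a x ^ 2 = 1 - 2 * ⟪a, x⟫ + ‖a‖ ^ 2 * ‖x‖ ^ 2 := by
  have hexpand : ‖x - a‖ ^ 2 + (1 - ‖x‖ ^ 2) * (1 - ‖a‖ ^ 2)
      = 1 - 2 * ⟪a, x⟫ + ‖a‖ ^ 2 * ‖x‖ ^ 2 := by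
    rw [norm_sub_sq_real, real_inner_comm]
    ring
  rw [qbracket, hexpand, Real.sq_sqrt ((sq_nonneg _).trans (sq_one_sub_norm_mul_norm_le a x))]

theorem sq_one_sub_norm_mul_norm_le_qbracket_sq (a x : En n) :
    (1 - ‖a‖ * ‖x‖) ^ 2 ≤ qbracket a x ^ 2 :=
  qbracket_sq a x ▸ sq_one_sub_norm_mul_norm_le a x

theorem sq_norm_sub_le_qbracket_sq {a x : En n} (ha : ‖a‖ ≤ 1) (hx : ‖x‖ ≤ 1) :
    ‖x - a‖ ^ 2 ≤ qbracket a x ^ 2 := by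
  have hprod : 0 ≤ (1 - ‖x‖ ^ 2) * (1 - ‖a‖ ^ 2) :=
    mul_nonneg (by nlinarith [norm_nonneg x]) (by nlinarith [norm_nonneg a])
  rw [qbracket, Real.sq_sqrt (by positivity)]
  linarith

theorem one_div_norm_pow_mul_qbracket_sq_le (k : ℕ) {x y : En n} (hx : ‖x‖ ≤ 1) (hy : ‖y‖ ≤ 1)
    (hyx : y ≠ x) :
    1 / (‖y‖ ^ k * qbracket x y ^ 2) ≤ 4 / ‖y‖ ^ k + 2 ^ k / ‖y - x‖ ^ 2 := by
  rcases le_or_gt ‖y‖ (1 / 2) with hy_small | hy_large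
  · have hxy : 1 / 2 ≤ 1 - ‖x‖ * ‖y‖ := by
      nlinarith [mul_le_mul hx hy_small (norm_nonneg y) zero_le_one]
    have hq : 1 / 4 ≤ qbracket x y ^ 2 :=
      calc (1 : ℝ) / 4 = (1 / 2) ^ 2 := by norm_num
        _ ≤ (1 - ‖x‖ * ‖y‖) ^ 2 := by gcongr
        _ ≤ qbracket x y ^ 2 := sq_one_sub_norm_mul_norm_le_qbracket_sq x y
    have hfar : 1 / (‖y‖ ^ k * qbracket x y ^ 2) ≤ 4 / ‖y‖ ^ k := by
      rw [mul_comm, ← div_div]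
      gcongr
      rw [div_le_iff₀ (by linarith)]
      linarith
    have : 0 ≤ 2 ^ k / ‖y - x‖ ^ 2 := by positivity
    linarith
  · have hd : 0 < ‖y - x‖ := norm_pos_iff.mpr (sub_ne_zero.mpr hyx)
    have hnear : 1 / (‖y‖ ^ k * qbracket x y ^ 2) ≤ 2 ^ k / ‖y - x‖ ^ 2 :=
      calc 1 / (‖y‖ ^ k * qbracket x y ^ 2) ≤ 1 / ((1 / 2) ^ k * ‖y - x‖ ^ 2) := by
            gcongr 1 / (?_ * ?_)
            · exact pow_le_pow_left₀ (by norm_num) hy_large.le k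
            · exact sq_norm_sub_le_qbracket_sq hx hy
        _ = 2 ^ k / ‖y - x‖ ^ 2 := by rw [div_pow, one_pow]; field_simp
    have : 0 ≤ 4 / ‖y‖ ^ k := by positivity
    linarith

end Bracket

theorem setLIntegral_ball_one_div_norm_pow_mul_qbracket_sq_le {n : ℕ} [NeZero n] (k : ℕ)
    {x : En n} (hx : ‖x‖ < 1) :
    ∫⁻ y in ball (0 : En n) 1, ENNReal.ofReal (1 / (‖y‖ ^ k * qbracket x y ^ 2))
      ≤ (∫⁻ y in ball (0 : En n) 1, ENNReal.ofReal (4 / ‖y‖ ^ k))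
        + ∫⁻ z in ball (0 : En n) 2, ENNReal.ofReal (2 ^ k / ‖z‖ ^ 2) := by
  have hpointwise : ∀ᵐ y ∂volume.restrict (ball (0 : En n) 1),
      ENNReal.ofReal (1 / (‖y‖ ^ k * qbracket x y ^ 2))
        ≤ ENNReal.ofReal (4 / ‖y‖ ^ k) + ENNReal.ofReal (2 ^ k / ‖y - x‖ ^ 2) := by
    filter_upwards [ae_restrict_mem measurableSet_ball,
      compl_mem_ae_iff.mpr (measure_singleton x)] with y hy hyx
    exact (ENNReal.ofReal_le_ofReal (one_div_norm_pow_mul_qbracket_sq_le k hx.le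
      (mem_ball_zero_iff.mp hy).le hyx)).trans ENNReal.ofReal_add_le
  have hball : ball (0 : En n) 1 ⊆ ball x 2 := fun y hy => by
    rw [mem_ball_iff_norm]
    linarith [norm_sub_le y x, mem_ball_zero_iff.mp hy]
  calc _ ≤ ∫⁻ y in ball (0 : En n) 1,
        ENNReal.ofReal (4 / ‖y‖ ^ k) + ENNReal.ofReal (2 ^ k / ‖y - x‖ ^ 2) :=
        lintegral_mono_ae hpointwise
    _ ≤ (∫⁻ y in ball (0 : En n) 1, ENNReal.ofReal (4 / ‖y‖ ^ k))
        + ∫⁻ y in ball x 2, ENNReal.ofReal (2 ^ k / ‖y - x‖ ^ 2) := by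
        rw [lintegral_add_left (by fun_prop)]
        gcongr
    _ = _ := by rw [setLIntegral_ball_comp_sub volume fun z => ENNReal.ofReal (2 ^ k / ‖z‖ ^ 2)]

/-- uniform bound for `J_n(x) = ∫_{𝔹ⁿ} dν(y)/(|y|^{n-2}[x,y]²)`. -/
theorem stmt_15 (n : ℕ) (hn : 3 ≤ n) :
    ∃ μ₅ : ℝ, ∀ x ∈ ball (0 : En n) 1,
      ∫⁻ y in ball (0 : En n) 1,
          ENNReal.ofReal (1 / (‖y‖ ^ (n - 2) * qbracket x y ^ 2)) ∂(nuMeasure n)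
        ≤ ENNReal.ofReal μ₅ := by
  have : NeZero n := ⟨by omega⟩
  have hdim : Module.finrank ℝ (En n) = n := finrank_euclideanSpace_fin
  set C : ℝ≥0∞ := (volume (ball (0 : En n) 1))⁻¹ *
    ((∫⁻ y in ball (0 : En n) 1, ENNReal.ofReal (4 / ‖y‖ ^ (n - 2)))
      + ∫⁻ z in ball (0 : En n) 2, ENNReal.ofReal (2 ^ (n - 2) / ‖z‖ ^ 2))
  have hC : C ≠ ∞ := ENNReal.mul_ne_top
    (ENNReal.inv_ne_top.mpr (measure_ball_pos volume 0 one_pos).ne')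
    (ENNReal.add_ne_top.mpr
      ⟨(setLIntegral_ball_div_norm_pow_lt_top volume (k := n - 2) (by omega) 4 1).ne,
        (setLIntegral_ball_div_norm_pow_lt_top volume (k := 2) (by omega) _ 2).ne⟩)
  refine ⟨C.toReal, fun x hx => ?_⟩
  rw [ENNReal.ofReal_toReal hC, nuMeasure, Measure.restrict_smul, lintegral_smul_measure,
    smul_eq_mul]
  exact mul_le_mul_right
    (setLIntegral_ball_one_div_norm_pow_mul_qbracket_sq_le (n - 2) (mem_ball_zero_iff.mp hx)) _
end

section
/- Let n ≥ 3 and let ψ ∈ C(𝔹ⁿ,ℝⁿ) satisfy |ψ(x)| ≤ M(1−|x|²) for all x ∈ 𝔹ⁿ, where M ≥ 0 is a constant. Then there exists a constant β₁ depending only on n and M such that for every x ∈ 𝔹ⁿ and every k ∈ {1,…,n}, ∫_{𝔹ⁿ} | (∂G_h/∂x_k)(x,y) | · |ψ(y)| dτ(y) ≤ β₁, where for x ≠ y, (∂G_h/∂x_k)(x,y) = −(x_k−y_k)(1−|x|²)^{n−1}(1−|y|²)^{n−1} / ( n |x−y|ⁿ [x,y]ⁿ ) − x_k (1−|x|²)^{n−2}(1−|y|²)^{n−1}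 / ( n |x−y|^{n−2} [x,y]ⁿ ). -/
open MeasureTheory Metric Set

noncomputable section

/-- The partial derivative `∂G_h/∂x_k` of the hyperbolic Green function (explicit formula). -/
def dGh (n : ℕ) (k : Fin n) (x y : En n) : ℝ :=
  -((x k - y k) * (1 - ‖x‖ ^ 2) ^ (n - 1) * (1 - ‖y‖ ^ 2) ^ (n - 1))
      / ((n : ℝ) * ‖x - y‖ ^ n * qbracket x y ^ n)
    - x k * (1 - ‖x‖ ^ 2) ^ (n - 2) * (1 - ‖y‖ ^ 2) ^ (n - 1)
      / ((n : ℝ) * ‖x - y‖ ^ (n - 2) * qbracket x y ^ n)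

end

/-!
Write `a = 1 - ‖x‖²`, `b = 1 - ‖y‖²`, `P = ‖y - x‖` and `q = [x,y]`. With `|ψ(y)| ≤ M b`,
the explicit formula gives `|∂G_h/∂x_k| |ψ(y)| / bⁿ ≤ (M/n) a^(n-2) (a + P) / (P^(n-1) qⁿ)`.
Since `q ≥ a/2` and `q ≥ P`, this is at most `(M 2ⁿ/n) min((a + P)/a², a/P²) / P^(n-1)`.
In polar coordinates about `x` the factor `P^(n-1)` cancels the Jacobian, and the remaining
integral `∫₀^∞ min((a + r)/a², a/r²) dr` is invariant under `r ↦ a r`, hence bounded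
independently of `x`.
-/

open scoped ENNReal

theorem lintegral_Ioi_ofReal_div_sq {c : ℝ} (hc : 0 < c) {a : ℝ} (ha : 0 ≤ a) :
    ∫⁻ r in Ioi c, ENNReal.ofReal (a / r ^ 2) = ENNReal.ofReal (a / c) := by
  have hint : IntegrableOn (fun r : ℝ => a * r ^ (-2 : ℝ)) (Ioi c) :=
    (integrableOn_Ioi_rpow_of_lt (by norm_num) hc).const_mul a
  have hpos : ∀ᵐ r ∂volume.restrict (Ioi c), 0 ≤ a * r ^ (-2 : ℝ) :=
    (ae_restrict_mem measurableSet_Ioi).mono fun r (hr : c < r) =>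
      mul_nonneg ha (Real.rpow_nonneg (hc.trans hr).le _)
  rw [setLIntegral_congr_fun measurableSet_Ioi fun r (hr : c < r) => by
      rw [div_eq_mul_inv, ← Real.rpow_two, ← Real.rpow_neg (hc.trans hr).le],
    ← ofReal_integral_eq_lintegral_ofReal hint hpos, integral_const_mul,
    integral_Ioi_rpow_of_lt (by norm_num) hc]
  norm_num [Real.rpow_neg_one, div_eq_mul_inv]

noncomputable def gradGreenProfile (a r : ℝ) : ℝ := min ((a + r) / a ^ 2) (a / r ^ 2)

theorem lintegral_gradGreenProfile_le {a : ℝ} (ha : 0 < a) :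
    ∫⁻ r in Ioi 0, ENNReal.ofReal (gradGreenProfile a r) ≤ 5 := by
  have hδ : 0 < a / 4 := by positivity
  calc ∫⁻ r in Ioi 0, ENNReal.ofReal (gradGreenProfile a r)
      ≤ (∫⁻ r in Ioc 0 (a / 4), ENNReal.ofReal (gradGreenProfile a r))
        + ∫⁻ r in Ioi (a / 4), ENNReal.ofReal (gradGreenProfile a r) := by
        rw [← Ioc_union_Ioi_eq_Ioi hδ.le]
        exact lintegral_union_le _ _ _
    _ ≤ (∫⁻ _ in Ioc 0 (a / 4), ENNReal.ofReal (5 / (4 * a)))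
        + ∫⁻ r in Ioi (a / 4), ENNReal.ofReal (a / r ^ 2) := by
        refine add_le_add (setLIntegral_mono' measurableSet_Ioc fun r hr => ?_)
          (setLIntegral_mono' measurableSet_Ioi fun r _ =>
            ENNReal.ofReal_le_ofReal (min_le_right _ _))
        refine ENNReal.ofReal_le_ofReal ((min_le_left _ _).trans ?_)
        rw [div_le_div_iff₀ (by positivity) (by positivity)]
        nlinarith [hr.2]
    _ = ENNReal.ofReal (5 / 16 + 4) := by
        rw [setLIntegral_const, Real.volume_Ioc, lintegral_Ioi_ofReal_div_sq hδ ha.le,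
          ← ENNReal.ofReal_mul (by positivity),
          ← ENNReal.ofReal_add (by positivity) (by positivity)]
        congr 1
        field_simp
        ring
    _ ≤ 5 := by
        rw [← ENNReal.ofReal_ofNat]
        exact ENNReal.ofReal_le_ofReal (by norm_num)

section Polar

local notation "dim" => Module.finrank ℝ

variable {E : Type*} [NormedAddCommGroup E] [NormedSpace ℝ E] [FiniteDimensional ℝ E]
  [MeasurableSpace E] [BorelSpace E] [Nontrivial E] (μ : Measure E) [μ.IsAddHaarMeasure]

theorem lintegral_fun_norm_addHaar {f : ℝ → ℝ≥0∞} (hf : Measurable f) :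
    ∫⁻ x, f ‖x‖ ∂μ = dim E * μ (ball 0 1) *
      ∫⁻ r in Ioi 0, ENNReal.ofReal (r ^ (dim E - 1)) * f r := by
  calc ∫⁻ x, f ‖x‖ ∂μ = ∫⁻ x : ({(0)}ᶜ : Set E), f ‖x.1‖ ∂(μ.comap (↑)) := by
        rw [lintegral_subtype_comap (measurableSet_singleton _).compl (fun x => f ‖x‖),
          restrict_compl_singleton]
    _ = ∫⁻ x, f x.2 ∂(μ.toSphere.prod (.volumeIoiPow (dim E - 1))) := by
        simpa using (μ.measurePreserving_homeomorphUnitSphereProd.lintegral_comp_emb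
          (Homeomorph.measurableEmbedding _) (f ∘ Subtype.val ∘ Prod.snd))
    _ = μ.toSphere univ * ∫⁻ r, f r ∂(.volumeIoiPow (dim E - 1)) := by
        rw [lintegral_prod (fun x : _ × Ioi (0 : ℝ) => f x.2)
          (hf.comp (measurable_subtype_coe.comp measurable_snd)).aemeasurable]
        simp [mul_comm]
    _ = _ := by
        rw [Measure.toSphere_apply_univ, Measure.volumeIoiPow,
          lintegral_withDensity_eq_lintegral_mul _ (by fun_prop) (by fun_prop),
          ← lintegral_subtype_comap measurableSet_Ioi]
        rfl

theorem lintegral_fun_norm_sub_addHaar {f : ℝ → ℝ≥0∞} (hf : Measurable f) (x : E) :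
    ∫⁻ y, f ‖y - x‖ ∂μ = dim E * μ (ball 0 1) *
      ∫⁻ r in Ioi 0, ENNReal.ofReal (r ^ (dim E - 1)) * f r := by
  rw [lintegral_sub_right_eq_self (fun y => f ‖y‖) x, lintegral_fun_norm_addHaar μ hf]

theorem lintegral_gradGreenProfile_comp_norm_sub_le {K a : ℝ} (hK : 0 ≤ K) (ha : 0 < a) (x : E) :
    ∫⁻ y, ENNReal.ofReal
        (K * (gradGreenProfile a ‖y - x‖ / ‖y - x‖ ^ (dim E - 1))) ∂μ
      ≤ ENNReal.ofReal (5 * dim E * K) * μ (ball 0 1) := by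
  rw [lintegral_fun_norm_sub_addHaar μ (f := fun r => ENNReal.ofReal
      (K * (gradGreenProfile a r / r ^ (dim E - 1))))
    (by unfold gradGreenProfile; fun_prop) x]
  calc (dim E : ℝ≥0∞) * μ (ball 0 1) * ∫⁻ r in Ioi 0,
        ENNReal.ofReal (r ^ (dim E - 1)) *
          ENNReal.ofReal (K * (gradGreenProfile a r / r ^ (dim E - 1)))
      = dim E * μ (ball 0 1) *
          (ENNReal.ofReal K * ∫⁻ r in Ioi 0, ENNReal.ofReal (gradGreenProfile a r)) := by
        rw [← lintegral_const_mul' _ _ ENNReal.ofReal_ne_top]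
        congr 1
        refine setLIntegral_congr_fun measurableSet_Ioi fun r (hr : 0 < r) => ?_
        rw [← ENNReal.ofReal_mul (by positivity), ← ENNReal.ofReal_mul hK]
        congr 1
        field_simp
    _ ≤ dim E * μ (ball 0 1) * (ENNReal.ofReal K * 5) := by
        gcongr
        exact lintegral_gradGreenProfile_le ha
    _ = ENNReal.ofReal (5 * dim E * K) * μ (ball 0 1) := by
        rw [ENNReal.ofReal_mul (by positivity), ENNReal.ofReal_mul (by positivity),
          ENNReal.ofReal_natCast, ENNReal.ofReal_ofNat]
        ring

end Polar

theorem pow_mul_add_div_pow_le_gradGreenProfile {n : ℕ} (hn : 3 ≤ n) {a P q : ℝ} (ha : 0 < a)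
    (hP : 0 < P) (hqa : a / 2 ≤ q) (hqP : P ≤ q) :
    a ^ (n - 2) * (a + P) / q ^ n ≤ 2 ^ n * gradGreenProfile a P := by
  obtain ⟨m, rfl⟩ : ∃ m, n = m + 3 := ⟨n - 3, by omega⟩
  rw [show m + 3 - 2 = m + 1 by omega, gradGreenProfile, mul_min_of_nonneg _ _ (by positivity)]
  have hq : 0 < q := by linarith
  refine le_min ?_ ?_
  · calc a ^ (m + 1) * (a + P) / q ^ (m + 3)
        ≤ a ^ (m + 1) * (a + P) / (a / 2) ^ (m + 3) := by gcongr
      _ = 2 ^ (m + 3) * ((a + P) / a ^ 2) := by rw [div_pow]; field_simp; ring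
  · rw [← mul_div_assoc, div_le_div_iff₀ (by positivity) (by positivity)]
    calc a ^ (m + 1) * (a + P) * P ^ 2 = a * a ^ m * (a + P) * P ^ 2 := by ring
      _ ≤ a * (2 * q) ^ m * (3 * q) * q ^ 2 := by gcongr <;> linarith
      _ ≤ 2 ^ (m + 3) * a * q ^ (m + 3) := by
          rw [mul_pow]
          have : 0 ≤ 2 ^ m * a * q ^ (m + 3) := by positivity
          linear_combination 5 * this

section GreenGradient

variable {n : ℕ}

theorem norm_sub_le_qbracket {x y : En n} (hx : ‖x‖ ≤ 1) (hy : ‖y‖ ≤ 1) :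
    ‖y - x‖ ≤ qbracket x y := by
  have : 0 ≤ (1 - ‖y‖ ^ 2) * (1 - ‖x‖ ^ 2) :=
    mul_nonneg (by nlinarith [norm_nonneg y]) (by nlinarith [norm_nonneg x])
  exact Real.le_sqrt_of_sq_le (by linarith)

theorem one_sub_norm_sq_div_two_le_qbracket {x y : En n} (hx : ‖x‖ ≤ 1) (hy : ‖y‖ ≤ 1) :
    (1 - ‖x‖ ^ 2) / 2 ≤ qbracket x y := by
  have hxy : |‖y‖ - ‖x‖| ≤ ‖y - x‖ := abs_norm_sub_norm_le y x
  have h1 : (1 - ‖x‖ ^ 2) / 2 ≤ 1 - ‖x‖ * ‖y‖ := by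
    nlinarith [norm_nonneg x, norm_nonneg y]
  -- `[x,y]² = ‖y - x‖² - (‖y‖ - ‖x‖)² + (1 - ‖x‖‖y‖)²`
  have h0 : 0 ≤ (1 - ‖x‖ ^ 2) / 2 := by nlinarith [norm_nonneg x]
  refine Real.le_sqrt_of_sq_le ((pow_le_pow_left₀ h0 h1 2).trans ?_)
  nlinarith [sq_abs (‖y‖ - ‖x‖), abs_nonneg (‖y‖ - ‖x‖)]

theorem dGh_self (hn : 3 ≤ n) (k : Fin n) (x : En n) : dGh n k x x = 0 := by
  simp [dGh, zero_pow (by omega : n - 2 ≠ 0), zero_pow (by omega : n ≠ 0)]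

theorem abs_dGh_le (hn : 2 ≤ n) (k : Fin n) {x y : En n} (hx : ‖x‖ ≤ 1) (hy : ‖y‖ ≤ 1)
    (hxy : y ≠ x) :
    |dGh n k x y| ≤ (1 - ‖y‖ ^ 2) ^ (n - 1) / n *
      ((1 - ‖x‖ ^ 2) ^ (n - 2) * ((1 - ‖x‖ ^ 2) + ‖y - x‖) / qbracket x y ^ n) /
        ‖y - x‖ ^ (n - 1) := by
  have ha : 0 ≤ 1 - ‖x‖ ^ 2 := by nlinarith [norm_nonneg x]
  have hb : 0 ≤ 1 - ‖y‖ ^ 2 := by nlinarith [norm_nonneg y]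
  have hP : 0 < ‖y - x‖ := norm_pos_iff.mpr (sub_ne_zero.mpr hxy)
  have hq : 0 < qbracket x y := hP.trans_le (norm_sub_le_qbracket hx hy)
  have hxk : |x k| ≤ 1 := (Real.norm_eq_abs _ ▸ PiLp.norm_apply_le x k).trans hx
  have hxyk : |x k - y k| ≤ ‖y - x‖ := by
    simpa [norm_sub_rev] using PiLp.norm_apply_le (x - y) k
  obtain ⟨m, rfl⟩ : ∃ m, n = m + 2 := ⟨n - 2, by omega⟩
  rw [dGh, norm_sub_rev x y, show m + 2 - 1 = m + 1 by omega, show m + 2 - 2 = m by omega]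
  refine (abs_sub _ _).trans ?_
  simp only [abs_neg, abs_div, abs_mul, abs_pow, abs_norm, Nat.abs_cast, abs_of_nonneg ha,
    abs_of_nonneg hb, abs_of_pos hq]
  calc _ ≤ ‖y - x‖ * (1 - ‖x‖ ^ 2) ^ (m + 1) * (1 - ‖y‖ ^ 2) ^ (m + 1)
          / (((m + 2 : ℕ) : ℝ) * ‖y - x‖ ^ (m + 2) * qbracket x y ^ (m + 2))
        + 1 * (1 - ‖x‖ ^ 2) ^ m * (1 - ‖y‖ ^ 2) ^ (m + 1)
          / (((m + 2 : ℕ) : ℝ) * ‖y - x‖ ^ m * qbracket x y ^ (m + 2)) := by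
        gcongr
    _ = _ := by field_simp; ring

theorem inv_pow_mul_abs_dGh_mul_le (hn : 3 ≤ n) (k : Fin n) {x y : En n}
    (hx : x ∈ ball (0 : En n) 1) (hy : y ∈ ball (0 : En n) 1) {M v : ℝ} (hv : 0 ≤ v)
    (hvM : v ≤ M * (1 - ‖y‖ ^ 2)) :
    ((1 - ‖y‖ ^ 2) ^ n)⁻¹ * (|dGh n k x y| * v) ≤
      M * 2 ^ n / n * (gradGreenProfile (1 - ‖x‖ ^ 2) ‖y - x‖ / ‖y - x‖ ^ (n - 1)) := by
  rw [mem_ball_zero_iff] at hx hy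
  rcases eq_or_ne y x with rfl | hxy
  · simp [dGh_self hn, zero_pow (by omega : n - 1 ≠ 0)]
  have ha : 0 < 1 - ‖x‖ ^ 2 := by nlinarith [norm_nonneg x]
  have hb : 0 < 1 - ‖y‖ ^ 2 := by nlinarith [norm_nonneg y]
  have hP : 0 < ‖y - x‖ := norm_pos_iff.mpr (sub_ne_zero.mpr hxy)
  have hM : 0 ≤ M := nonneg_of_mul_nonneg_left (hv.trans hvM) hb
  have hn1 : (1 - ‖y‖ ^ 2) ^ n = (1 - ‖y‖ ^ 2) ^ (n - 1) * (1 - ‖y‖ ^ 2) := by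
    rw [← pow_succ, Nat.sub_add_cancel (by omega)]
  calc ((1 - ‖y‖ ^ 2) ^ n)⁻¹ * (|dGh n k x y| * v)
      ≤ ((1 - ‖y‖ ^ 2) ^ n)⁻¹ * ((1 - ‖y‖ ^ 2) ^ (n - 1) / n *
          ((1 - ‖x‖ ^ 2) ^ (n - 2) * ((1 - ‖x‖ ^ 2) + ‖y - x‖) / qbracket x y ^ n) /
            ‖y - x‖ ^ (n - 1) * (M * (1 - ‖y‖ ^ 2))) := by
        have hd := abs_dGh_le (by omega) k hx.le hy.le hxy
        exact mul_le_mul_of_nonneg_left (mul_le_mul hd hvM hv ((abs_nonneg _).trans hd))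
          (by positivity)
    _ = M / n * ((1 - ‖x‖ ^ 2) ^ (n - 2) * ((1 - ‖x‖ ^ 2) + ‖y - x‖) / qbracket x y ^ n) /
          ‖y - x‖ ^ (n - 1) := by
        rw [hn1]
        field_simp
    _ ≤ M / n * (2 ^ n * gradGreenProfile (1 - ‖x‖ ^ 2) ‖y - x‖) / ‖y - x‖ ^ (n - 1) := by
        gcongr
        exact pow_mul_add_div_pow_le_gradGreenProfile hn ha hP
          (one_sub_norm_sq_div_two_le_qbracket hx.le hy.le) (norm_sub_le_qbracket hx.le hy.le)
    _ = _ := by ring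

end GreenGradient

theorem setLIntegral_tauMeasure {n : ℕ} {s : Set (En n)} (hs : MeasurableSet s)
    (f : En n → ℝ≥0∞) :
    ∫⁻ y in s, f y ∂tauMeasure n = (volume (ball (0 : En n) 1))⁻¹ *
      ∫⁻ y in s, ENNReal.ofReal ((1 - ‖y‖ ^ 2) ^ n)⁻¹ * f y := by
  rw [tauMeasure, nuMeasure, restrict_withDensity hs,
    lintegral_withDensity_eq_lintegral_mul_non_measurable _ (by fun_prop)
      (ae_of_all _ fun _ => ENNReal.ofReal_lt_top),
    Measure.restrict_smul, lintegral_smul_measure]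
  rfl

/-- uniform bound `∫_{𝔹ⁿ} |∂G_h/∂x_k(x,y)| |ψ(y)| dτ(y) ≤ β₁`. -/
theorem stmt_16 (n : ℕ) (hn : 3 ≤ n) (M : ℝ) (hM : 0 ≤ M) :
    ∃ β₁ : ℝ, ∀ ψ : En n → En n,
      ContinuousOn ψ (ball (0 : En n) 1) →
      (∀ x ∈ ball (0 : En n) 1, ‖ψ x‖ ≤ M * (1 - ‖x‖ ^ 2)) →
      ∀ x ∈ ball (0 : En n) 1, ∀ k : Fin n,
        ∫⁻ y in ball (0 : En n) 1,
            ENNReal.ofReal (|dGh n k x y| * ‖ψ y‖) ∂(tauMeasure n)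
          ≤ ENNReal.ofReal β₁ := by
  refine ⟨5 * 2 ^ n * M, fun ψ _ hψ x hx k => ?_⟩
  have : NeZero n := ⟨by omega⟩
  have ha : 0 < 1 - ‖x‖ ^ 2 := by nlinarith [norm_nonneg x, mem_ball_zero_iff.mp hx]
  set c := volume (ball (0 : En n) 1)
  calc ∫⁻ y in ball 0 1, ENNReal.ofReal (|dGh n k x y| * ‖ψ y‖) ∂tauMeasure n
      = c⁻¹ * ∫⁻ y in ball 0 1,
          ENNReal.ofReal ((1 - ‖y‖ ^ 2) ^ n)⁻¹ * ENNReal.ofReal (|dGh n k x y| * ‖ψ y‖) :=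
        setLIntegral_tauMeasure measurableSet_ball _
    _ ≤ c⁻¹ * ∫⁻ y, ENNReal.ofReal (M * 2 ^ n / n *
          (gradGreenProfile (1 - ‖x‖ ^ 2) ‖y - x‖ / ‖y - x‖ ^ (n - 1))) := by
        gcongr c⁻¹ * ?_
        refine le_trans (setLIntegral_mono' measurableSet_ball fun y hy => ?_)
          (setLIntegral_le_lintegral (ball (0 : En n) 1) _)
        rw [← ENNReal.ofReal_mul' (by positivity)]
        exact ENNReal.ofReal_le_ofReal
          (inv_pow_mul_abs_dGh_mul_le hn k hx hy (norm_nonneg _) (hψ y hy))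
    _ ≤ c⁻¹ * (ENNReal.ofReal (5 * n * (M * 2 ^ n / n)) * c) := by
        gcongr c⁻¹ * ?_
        simpa using lintegral_gradGreenProfile_comp_norm_sub_le volume (by positivity) ha x
    _ = ENNReal.ofReal (5 * 2 ^ n * M) := by
        rw [mul_comm, ← div_eq_mul_inv, ENNReal.mul_div_cancel_right
          (measure_ball_pos volume 0 one_pos).ne' measure_ball_lt_top.ne]
        congr 1
        field_simp
end

section
/- Let M ≥ 0 be a constant and define w₀ on the closed unit disk cl 𝔻 ⊂ ℂ by w₀(re^{iθ}) = Σ_{k=1}^∞ r^k cos(kθ)/k² − (M/4)(1−r²), i.e. w₀(z) = Re( Σ_{k=1}^∞ z^k/k² ) − (M/4)(1−|z|²). Then: (1) w₀ ∈ C²(𝔻,ℝ) ∩ C(cl 𝔻,ℝ) and Δw₀(z) = M for all z ∈ 𝔻 (equivalently Δ_h w₀(z) = M(1−|z|²)²); (2) w₀ is not Lipschitz continuous on 𝔻, i.e. there is no constant L with |w₀(z₁)−w₀(z₂)| ≤ L|z₁−z₂| for all z₁, z₂ ∈ 𝔻. -/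
open MeasureTheory Metric Set

noncomputable section

/-- `w₀(z) = Re(Σ_{k≥1} z^k/k²) − (M/4)(1−|z|²)`. -/
def w0 (M : ℝ) (z : ℂ) : ℝ :=
  (∑' k : ℕ, (z ^ (k + 1) / ((k : ℂ) + 1) ^ 2)).re - M / 4 * (1 - ‖z‖ ^ 2)

/-- The Laplacian of a real function on `ℂ ≅ ℝ²`:
`Δf(z) = ∂²f/∂x²(z) + ∂²f/∂y²(z)`. -/
def lapC (f : ℂ → ℝ) (z : ℂ) : ℝ :=
  fderiv ℝ (fun w => fderiv ℝ f w 1) z 1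
    + fderiv ℝ (fun w => fderiv ℝ f w Complex.I) z Complex.I

end

/-!
`w₀` is the real part of the dilogarithm `Li₂(z) = Σ_{k ≥ 1} z^k/k²` plus the radial quadratic
`(M/4)(|z|² - 1)`. Since `Σ 1/k² < ∞`, the series for `Li₂` converges uniformly on the closed disk,
so `Li₂` is continuous there and holomorphic inside; hence `Re Li₂` is harmonic, and `Δ|z|² = 4`
gives `Δw₀ = M`.

On the other hand, for `0 ≤ r < s < 1` the slope of `Re Li₂` between `r` and `s` is at least
`Σ_{k<N} r^k/(k+1)` for every `N`, which tends to the harmonic number `H_N` as `r → 1`. As `H_N`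
is unbounded, `Re Li₂` is not Lipschitz on `[0, 1)`, and neither is `w₀`, whose quadratic part is.
-/

open Complex Filter Topology

noncomputable def dilog (z : ℂ) : ℂ := ∑' k : ℕ, z ^ (k + 1) / ((k : ℂ) + 1) ^ 2

lemma summable_one_div_nat_add_one_sq : Summable fun k : ℕ => 1 / ((k : ℝ) + 1) ^ 2 := by
  exact_mod_cast (summable_nat_add_iff 1).mpr (Real.summable_one_div_nat_pow.mpr one_lt_two)

lemma norm_dilog_term_le {𝕜 : Type*} [RCLike 𝕜] {z : 𝕜} (hz : ‖z‖ ≤ 1) (k : ℕ) :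
    ‖z ^ (k + 1) / ((k : 𝕜) + 1) ^ 2‖ ≤ 1 / ((k : ℝ) + 1) ^ 2 := by
  rw [norm_div, norm_pow, norm_pow]
  gcongr
  · exact pow_le_one₀ (norm_nonneg z) hz
  · exact_mod_cast (RCLike.norm_natCast (K := 𝕜) (k + 1)).ge

lemma summable_dilog_term {𝕜 : Type*} [RCLike 𝕜] {z : 𝕜} (hz : ‖z‖ ≤ 1) :
    Summable fun k : ℕ => z ^ (k + 1) / ((k : 𝕜) + 1) ^ 2 :=
  summable_one_div_nat_add_one_sq.of_norm_bounded (norm_dilog_term_le hz)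

lemma differentiableOn_dilog : DifferentiableOn ℂ dilog (ball 0 1) :=
  differentiableOn_tsum_of_summable_norm summable_one_div_nat_add_one_sq
    (fun _ => ((differentiable_pow _).div_const _).differentiableOn) isOpen_ball
    fun k _ hz => norm_dilog_term_le (mem_ball_zero_iff.mp hz).le k

lemma continuousOn_dilog : ContinuousOn dilog (closedBall 0 1) :=
  continuousOn_tsum (fun _ => ((continuous_pow _).div_const _).continuousOn)
    summable_one_div_nat_add_one_sq fun k _ hz =>
      norm_dilog_term_le (mem_closedBall_zero_iff.mp hz) k

lemma re_dilog_ofReal (t : ℝ) : (dilog t).re = ∑' k : ℕ, t ^ (k + 1) / ((k : ℝ) + 1) ^ 2 := by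
  rw [dilog, ← Complex.ofReal_re (∑' k : ℕ, _), Complex.ofReal_tsum]
  push_cast
  rfl

lemma w0_eq (M : ℝ) : w0 M = fun z => (dilog z).re + (M / 4 * ‖z‖ ^ 2 + -(M / 4)) := by
  funext z
  rw [w0, dilog]
  ring

lemma fderiv_re_apply {f : ℂ → ℂ} {z : ℂ} (hf : DifferentiableAt ℂ f z) (v : ℂ) :
    fderiv ℝ (fun w => (f w).re) z v = (deriv f z * v).re := by
  have h : HasFDerivAt (fun w => (f w).re)
      (reCLM.comp ((fderiv ℂ f z).restrictScalars ℝ)) z :=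
    reCLM.hasFDerivAt.comp z (hf.hasFDerivAt.restrictScalars ℝ)
  rw [h.fderiv]
  simp [mul_comm]

lemma lapC_re_eq_zero {f : ℂ → ℂ} {U : Set ℂ} {z : ℂ} (hU : IsOpen U)
    (hf : DifferentiableOn ℂ f U) (hz : z ∈ U) : lapC (fun w => (f w).re) z = 0 := by
  have hfU : ∀ v : ℂ, (fun w => fderiv ℝ (fun x => (f x).re) w v) =ᶠ[𝓝 z]
      fun w => (deriv f w * v).re :=
    fun v => eventually_of_mem (hU.mem_nhds hz) fun w hw =>
      fderiv_re_apply (hf.differentiableAt (hU.mem_nhds hw)) v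
  have hf'z : DifferentiableAt ℂ (deriv f) z := (hf.deriv hU).differentiableAt (hU.mem_nhds hz)
  rw [lapC, (hfU 1).fderiv_eq, (hfU I).fderiv_eq, fderiv_re_apply (hf'z.mul_const 1),
    fderiv_re_apply (hf'z.mul_const I), deriv_mul_const hf'z, deriv_mul_const hf'z]
  simp

lemma lapC_add {f g : ℂ → ℝ} {z : ℂ} (hf : ContDiffAt ℝ 2 f z) (hg : ContDiffAt ℝ 2 g z) :
    lapC (fun w => f w + g w) z = lapC f z + lapC g z := by
  have hsplit : ∀ v : ℂ, (fun w => fderiv ℝ (fun x => f x + g x) w v) =ᶠ[𝓝 z]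
      fun w => fderiv ℝ f w v + fderiv ℝ g w v := by
    intro v
    filter_upwards [hf.eventually (by simp), hg.eventually (by simp)] with w hfw hgw
    rw [fderiv_fun_add (hfw.differentiableAt two_ne_zero) (hgw.differentiableAt two_ne_zero)]
    rfl
  have hdiff : ∀ {h : ℂ → ℝ}, ContDiffAt ℝ 2 h z → ∀ v : ℂ,
      DifferentiableAt ℝ (fun w => fderiv ℝ h w v) z := fun hh v =>
    ((hh.fderiv_right (m := 1) le_rfl).differentiableAt one_ne_zero).clm_apply
      (differentiableAt_const v)
  rw [lapC, lapC, lapC, (hsplit 1).fderiv_eq, (hsplit I).fderiv_eq,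
    fderiv_fun_add (hdiff hf 1) (hdiff hg 1), fderiv_fun_add (hdiff hf I) (hdiff hg I)]
  simp only [FunLike.coe_add, Pi.add_apply]
  ring

lemma lapC_mul_norm_sq_add (a b : ℝ) (z : ℂ) : lapC (fun w => a * ‖w‖ ^ 2 + b) z = 4 * a := by
  have hdir : ∀ v : ℂ, (fun w => fderiv ℝ (fun x : ℂ => a * ‖x‖ ^ 2 + b) w v) =
      fun w => (2 * a) * inner ℝ v w := by
    intro v; funext w
    rw [(((hasStrictFDerivAt_norm_sq w).hasFDerivAt.const_mul a).add_const b).fderiv]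
    simp [real_inner_comm]
    ring
  have hlin : ∀ v : ℂ, fderiv ℝ (fun w : ℂ => (2 * a) * inner ℝ v w) z v = 2 * a * ‖v‖ ^ 2 := by
    intro v
    have h : HasFDerivAt (fun w : ℂ => (2 * a) * inner ℝ v w) ((2 * a) • innerSL ℝ v) z :=
      (innerSL ℝ v).hasFDerivAt.const_mul (2 * a)
    rw [h.fderiv]
    simp
  rw [lapC, hdir, hdir, hlin, hlin]
  norm_num
  ring

lemma contDiffAt_re_dilog {z : ℂ} (hz : z ∈ ball (0 : ℂ) 1) :
    ContDiffAt ℝ 2 (fun w => (dilog w).re) z :=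
  reCLM.contDiff.contDiffAt.comp z
    ((differentiableOn_dilog.analyticAt (isOpen_ball.mem_nhds hz)).contDiffAt.restrict_scalars ℝ)

lemma contDiff_mul_norm_sq_add (a b : ℝ) : ContDiff ℝ 2 fun w : ℂ => a * ‖w‖ ^ 2 + b :=
  (contDiff_const.mul (contDiff_norm_sq ℝ)).add contDiff_const

lemma contDiffAt_w0 (M : ℝ) {z : ℂ} (hz : z ∈ ball (0 : ℂ) 1) : ContDiffAt ℝ 2 (w0 M) z := by
  rw [w0_eq]
  exact (contDiffAt_re_dilog hz).add (contDiff_mul_norm_sq_add _ _).contDiffAt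

lemma lapC_w0 (M : ℝ) {z : ℂ} (hz : z ∈ ball (0 : ℂ) 1) : lapC (w0 M) z = M := by
  rw [w0_eq, lapC_add (contDiffAt_re_dilog hz) (contDiff_mul_norm_sq_add _ _).contDiffAt,
    lapC_re_eq_zero isOpen_ball differentiableOn_dilog hz, lapC_mul_norm_sq_add]
  ring

lemma continuousOn_w0 (M : ℝ) : ContinuousOn (w0 M) (closedBall (0 : ℂ) 1) := by
  rw [w0_eq]
  exact (continuous_re.comp_continuousOn continuousOn_dilog).add
    (contDiff_mul_norm_sq_add _ _).continuous.continuousOn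

open Finset in
lemma add_one_mul_pow_mul_sub_le {r s : ℝ} (hr : 0 ≤ r) (hrs : r ≤ s) (n : ℕ) :
    (n + 1) * r ^ n * (s - r) ≤ s ^ (n + 1) - r ^ (n + 1) := by
  have hterm : ∀ i ∈ range (n + 1), r ^ n ≤ s ^ i * r ^ (n + 1 - 1 - i) := by
    intro i hi
    rw [Nat.add_sub_cancel, ← pow_mul_pow_sub r (Nat.lt_succ_iff.mp (mem_range.mp hi))]
    gcongr
  calc (n + 1) * r ^ n * (s - r) = (∑ _i ∈ range (n + 1), r ^ n) * (s - r) := by simp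
    _ ≤ (∑ i ∈ range (n + 1), s ^ i * r ^ (n + 1 - 1 - i)) * (s - r) := by
      gcongr with i hi
      exact hterm i hi
    _ = s ^ (n + 1) - r ^ (n + 1) := geom_sum₂_mul s r (n + 1)

open Finset in
lemma mul_sum_le_re_dilog_sub {r s : ℝ} (hr : 0 ≤ r) (hrs : r ≤ s) (hs : s ≤ 1) (N : ℕ) :
    (s - r) * ∑ k ∈ range N, r ^ k / (k + 1) ≤ (dilog s).re - (dilog r).re := by
  have habs : ∀ {t : ℝ}, 0 ≤ t → t ≤ 1 → ‖t‖ ≤ 1 := fun ht0 ht1 => by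
    rwa [Real.norm_of_nonneg ht0]
  have hsum_r := summable_dilog_term (habs hr (hrs.trans hs))
  have hsum_s := summable_dilog_term (habs (hr.trans hrs) hs)
  have hmono : ∀ k : ℕ, 0 ≤ s ^ (k + 1) / ((k : ℝ) + 1) ^ 2 - r ^ (k + 1) / ((k : ℝ) + 1) ^ 2 :=
    fun k => sub_nonneg.mpr (by gcongr)
  rw [re_dilog_ofReal, re_dilog_ofReal, ← hsum_s.tsum_sub hsum_r, mul_sum]
  refine le_trans (sum_le_sum fun k _ => ?_) ((hsum_s.sub hsum_r).sum_le_tsum _ fun k _ => hmono k)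
  rw [div_sub_div_same]
  calc (s - r) * (r ^ k / (k + 1)) = (k + 1) * r ^ k * (s - r) / ((k : ℝ) + 1) ^ 2 := by
        field_simp
    _ ≤ (s ^ (k + 1) - r ^ (k + 1)) / ((k : ℝ) + 1) ^ 2 := by
        gcongr
        exact add_one_mul_pow_mul_sub_le hr hrs k

open Finset in
lemma not_exists_slope_bound_re_dilog :
    ¬ ∃ L : ℝ, ∀ r s : ℝ, 0 ≤ r → r < s → s < 1 → (dilog s).re - (dilog r).re ≤ L * (s - r) := by
  rintro ⟨L, hL⟩
  have hpartial : ∀ N, ∀ r ∈ Ioo (0 : ℝ) 1, ∑ k ∈ range N, r ^ k / (k + 1) ≤ L := by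
    intro N r ⟨hr0, hr1⟩
    have hgap : 0 < (r + 1) / 2 - r := by linarith
    refine le_of_mul_le_mul_left ?_ hgap
    calc ((r + 1) / 2 - r) * ∑ k ∈ range N, r ^ k / (k + 1)
        ≤ (dilog ((r + 1) / 2 : ℝ)).re - (dilog r).re :=
          mul_sum_le_re_dilog_sub hr0.le (by linarith) (by linarith) N
      _ ≤ L * ((r + 1) / 2 - r) := hL r _ hr0.le (by linarith) (by linarith)
      _ = ((r + 1) / 2 - r) * L := mul_comm _ _
  have hharmonic : ∀ N, ∑ k ∈ range N, (1 : ℝ) / (k + 1) ≤ L := by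
    intro N
    have hcont : Tendsto (fun r : ℝ => ∑ k ∈ range N, r ^ k / (k + 1)) (𝓝[<] 1)
        (𝓝 (∑ k ∈ range N, (1 : ℝ) / (k + 1))) := by
      refine ((continuous_finsetSum (range N) fun k _ =>
        (continuous_pow k).div_const ((k : ℝ) + 1)).tendsto' 1 _ ?_).mono_left nhdsWithin_le_nhds
      simp
    exact le_of_tendsto hcont (eventually_of_mem (Ioo_mem_nhdsLT zero_lt_one) (hpartial N))
  obtain ⟨N, hN⟩ := (Real.tendsto_sum_range_one_div_nat_succ_atTop.eventually_gt_atTop L).exists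
  exact (hharmonic N).not_gt hN

lemma not_lipschitz_w0 (M : ℝ) :
    ¬ ∃ L : ℝ, ∀ z₁ ∈ ball (0 : ℂ) 1, ∀ z₂ ∈ ball (0 : ℂ) 1,
        |w0 M z₁ - w0 M z₂| ≤ L * ‖z₁ - z₂‖ := by
  rintro ⟨L, hL⟩
  refine not_exists_slope_bound_re_dilog ⟨L + |M| / 2, fun r s hr hrs hs => ?_⟩
  have hball : ∀ {t : ℝ}, 0 ≤ t → t < 1 → (t : ℂ) ∈ ball (0 : ℂ) 1 := fun ht0 ht1 => by
    rwa [mem_ball_zero_iff, Complex.norm_of_nonneg ht0]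
  have hw0 : ∀ t : ℝ, w0 M t = (dilog t).re + (M / 4 * t ^ 2 - M / 4) := fun t => by
    simp only [w0_eq, Complex.norm_real, Real.norm_eq_abs, sq_abs]
    ring
  have hlip := hL s (hball (hr.trans hrs.le) hs) r (hball hr (hrs.trans hs))
  rw [← Complex.ofReal_sub, Complex.norm_of_nonneg (by linarith), hw0, hw0] at hlip
  have hquad : -(M / 4 * s ^ 2 - M / 4 * r ^ 2) ≤ |M| / 2 * (s - r) :=
    calc -(M / 4 * s ^ 2 - M / 4 * r ^ 2) = -M / 4 * (s + r) * (s - r) := by ring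
      _ ≤ |M| / 4 * 2 * (s - r) := by
        gcongr
        · linarith
        · exact neg_le_abs M
        · linarith
      _ = |M| / 2 * (s - r) := by ring
  linarith [(le_abs_self _).trans hlip]

theorem stmt_19_general (M : ℝ) :
    (ContDiffOn ℝ 2 (w0 M) (ball (0 : ℂ) 1) ∧
      ContinuousOn (w0 M) (closedBall (0 : ℂ) 1) ∧
      (∀ z ∈ ball (0 : ℂ) 1, lapC (w0 M) z = M) ∧
      (∀ z ∈ ball (0 : ℂ) 1,
        (1 - ‖z‖ ^ 2) ^ 2 * lapC (w0 M) z = M * (1 - ‖z‖ ^ 2) ^ 2)) ∧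
    ¬ ∃ L : ℝ, ∀ z₁ ∈ ball (0 : ℂ) 1, ∀ z₂ ∈ ball (0 : ℂ) 1,
        |w0 M z₁ - w0 M z₂| ≤ L * ‖z₁ - z₂‖ := by
  refine ⟨⟨fun z hz => (contDiffAt_w0 M hz).contDiffWithinAt, continuousOn_w0 M,
    fun z hz => lapC_w0 M hz, fun z hz => by rw [lapC_w0 M hz, mul_comm]⟩, not_lipschitz_w0 M⟩

/-- `w₀ ∈ C²(𝔻,ℝ) ∩ C(cl 𝔻,ℝ)` with `Δw₀ = M` (equivalently
`Δ_h w₀(z) = M(1−|z|²)²`), but `w₀` is not Lipschitz continuous on `𝔻`. -/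
theorem stmt_19 (M : ℝ) (hM : 0 ≤ M) :
    (ContDiffOn ℝ 2 (w0 M) (ball (0 : ℂ) 1) ∧
      ContinuousOn (w0 M) (closedBall (0 : ℂ) 1) ∧
      (∀ z ∈ ball (0 : ℂ) 1, lapC (w0 M) z = M) ∧
      (∀ z ∈ ball (0 : ℂ) 1,
        (1 - ‖z‖ ^ 2) ^ 2 * lapC (w0 M) z = M * (1 - ‖z‖ ^ 2) ^ 2)) ∧
    ¬ ∃ L : ℝ, ∀ z₁ ∈ ball (0 : ℂ) 1, ∀ z₂ ∈ ball (0 : ℂ) 1,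
        |w0 M z₁ - w0 M z₂| ≤ L * ‖z₁ - z₂‖ :=
  stmt_19_general M
end
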